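/- arXiv:2001.07806 — 6 statements merged into one kernel-verified Lean document; each statement's English description precedes it below -/
import Mathlib

section
/- Let A be an n×n matrix over the max-plus semiring with Tr(A) := max(tr A, tr A², …, tr Aⁿ) ≤ 0. Then the Kleene star A* := I ⊕ A ⊕ A² ⊕ ⋯ ⊕ A^{n-1} satisfies A* ≥ A^k entrywise for every integer k ≥ 0. -/
noncomputable section

/-- The max-plus carrier: ℝ ∪ {-∞}, with ⊥ playing the role of -∞. -/
abbrev MP := WithBot ℝ

/-- Max-plus matrix product: (A⊗B)_ik = max_j (a_ij + b_jk). -/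
def mpMul {m n p : ℕ} (A : Matrix (Fin m) (Fin n) MP) (B : Matrix (Fin n) (Fin p) MP) :
    Matrix (Fin m) (Fin p) MP :=
  fun i k => Finset.univ.sup fun j => A i j + B j k

/-- Max-plus matrix-vector product: (Ax)_i = max_j (a_ij + x_j). -/
def mpMulVec {m n : ℕ} (A : Matrix (Fin m) (Fin n) MP) (x : Fin n → MP) : Fin m → MP :=
  fun i => Finset.univ.sup fun j => A i j + x j

/-- Conjugate (multiplicative inverse transpose): (A⁻)_ij = -a_ji if a_ji ≠ -∞, else -∞. -/
def mpConj {m n : ℕ} (A : Matrix (Fin m) (Fin n) MP) : Matrix (Fin n) (Fin m) MP :=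
  fun i j => (A j i).map fun r => -r

/-- Tropical identity matrix: 0 on the diagonal, -∞ elsewhere. -/
def mpId (n : ℕ) : Matrix (Fin n) (Fin n) MP :=
  fun i j => if i = j then (0 : MP) else ⊥

/-- Tropical matrix powers, A⁰ = I. -/
def mpPow {n : ℕ} (A : Matrix (Fin n) (Fin n) MP) : ℕ → Matrix (Fin n) (Fin n) MP
  | 0 => mpId n
  | k + 1 => mpMul A (mpPow A k)

/-- Tropical trace: tr A = max_i a_ii. -/
def mpTr {n : ℕ} (A : Matrix (Fin n) (Fin n) MP) : MP :=
  Finset.univ.sup fun i => A i i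

/-- Tr(A) = tr A ⊕ tr A² ⊕ ⋯ ⊕ tr Aⁿ. -/
def mpTrFun {n : ℕ} (A : Matrix (Fin n) (Fin n) MP) : MP :=
  (Finset.Icc 1 n).sup fun k => mpTr (mpPow A k)

/-- Bounded Kleene star: A* = I ⊕ A ⊕ ⋯ ⊕ A^{n-1}. -/
def mpStar {n : ℕ} (A : Matrix (Fin n) (Fin n) MP) : Matrix (Fin n) (Fin n) MP :=
  fun i j => (Finset.range n).sup fun k => mpPow A k i j

/-- Entrywise max of matrices: A ⊕ B. -/
def mpAdd {m n : ℕ} (A B : Matrix (Fin m) (Fin n) MP) : Matrix (Fin m) (Fin n) MP :=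
  fun i j => A i j ⊔ B i j

/-- Strictly row-monomial: exactly one entry ≠ -∞ in each row. -/
def RowMonomial {m n : ℕ} (A : Matrix (Fin m) (Fin n) MP) : Prop :=
  ∀ i, ∃! j, A i j ≠ ⊥

/-- Row-regular: at least one entry ≠ -∞ in each row. -/
def RowRegular {m n : ℕ} (A : Matrix (Fin m) (Fin n) MP) : Prop :=
  ∀ i, ∃ j, A i j ≠ ⊥

/-- Regular vector: all entries finite. -/
def Regular {n : ℕ} (x : Fin n → MP) : Prop := ∀ j, x j ≠ ⊥

/-!
Entries of `A^k` are maximal weights of walks of length `k`. A walk of length `k ≥ n` visits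
some vertex twice among its first `n + 1` steps, so it contains a closed subwalk of length
`d ∈ [1, n]`, whose weight is at most `tr A^d ≤ Tr(A) ≤ 0`. Cutting it out leaves a walk of
length `k - d` with the same endpoints and no smaller weight, so `A^k ≤ A^{k-d}` entrywise, and
strong induction on `k` brings every power down to one of `I, A, …, A^{n-1}`.
-/

open Finset

section Walks

variable {n : ℕ} (A : Matrix (Fin n) (Fin n) MP)

def mpWalkWeight (p : ℕ → Fin n) (k : ℕ) : MP :=
  ∑ t ∈ range k, A (p t) (p (t + 1))

theorem mpWalkWeight_succ (p : ℕ → Fin n) (k : ℕ) :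
    mpWalkWeight A p (k + 1) = A (p 0) (p 1) + mpWalkWeight A (fun t => p (t + 1)) k := by
  rw [mpWalkWeight, sum_range_succ', add_comm]
  rfl

theorem mpWalkWeight_add (p : ℕ → Fin n) (a b : ℕ) :
    mpWalkWeight A p (a + b) = mpWalkWeight A p a + mpWalkWeight A (fun t => p (a + t)) b :=
  sum_range_add _ a b

theorem mpWalkWeight_le_mpPow {p : ℕ → Fin n} {k : ℕ} {i j : Fin n} (hi : p 0 = i)
    (hj : p k = j) : mpWalkWeight A p k ≤ mpPow A k i j := by
  induction k generalizing p i with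
  | zero =>
    subst hi hj
    simp [mpWalkWeight, mpPow, mpId]
  | succ k ih =>
    rw [mpWalkWeight_succ, ← hi]
    calc A (p 0) (p 1) + mpWalkWeight A (fun t => p (t + 1)) k
        ≤ A (p 0) (p 1) + mpPow A k (p 1) j := by gcongr; exact ih rfl hj
      _ ≤ mpPow A (k + 1) (p 0) j :=
        le_sup (f := fun l => A (p 0) l + mpPow A k l j) (mem_univ (p 1))

theorem exists_mpWalkWeight_eq_mpPow {k : ℕ} {i j : Fin n} (h : mpPow A k i j ≠ ⊥) :
    ∃ p : ℕ → Fin n, p 0 = i ∧ p k = j ∧ mpPow A k i j = mpWalkWeight A p k := by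
  induction k generalizing i with
  | zero =>
    have hij : i = j := by by_contra hij; simp [mpPow, mpId, hij] at h
    exact ⟨fun _ => i, rfl, hij, by simp [mpPow, mpId, hij, mpWalkWeight]⟩
  | succ k ih =>
    obtain ⟨l, -, hl⟩ := exists_mem_eq_sup univ ⟨i, mem_univ i⟩
      (fun l => A i l + mpPow A k l j)
    change mpPow A (k + 1) i j = A i l + mpPow A k l j at hl
    have hlj : mpPow A k l j ≠ ⊥ := fun hbot => h (by rw [hl, hbot, WithBot.add_bot])
    obtain ⟨q, hq0, hqk, hq⟩ := ih hlj
    refine ⟨fun t => match t with | 0 => i | t + 1 => q t, rfl, hqk, ?_⟩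
    subst hq0
    rw [mpWalkWeight_succ, hl, hq]

theorem mpPow_add_mpPow_le (a b : ℕ) (i l j : Fin n) :
    mpPow A a i l + mpPow A b l j ≤ mpPow A (a + b) i j := by
  induction a generalizing i with
  | zero =>
    by_cases hil : i = l <;> simp [mpPow, mpId, hil]
  | succ a ih =>
    obtain ⟨m, -, hm⟩ := exists_mem_eq_sup univ ⟨i, mem_univ i⟩
      (fun m => A i m + mpPow A a m l)
    change mpPow A (a + 1) i l = A i m + mpPow A a m l at hm
    rw [hm, add_assoc, Nat.add_right_comm]
    calc A i m + (mpPow A a m l + mpPow A b l j) ≤ A i m + mpPow A (a + b) m j := by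
          gcongr; exact ih m
      _ ≤ mpPow A (a + b + 1) i j :=
        le_sup (f := fun m => A i m + mpPow A (a + b) m j) (mem_univ m)

theorem mpPow_self_le_zero (h : mpTrFun A ≤ 0) {d : ℕ} (hd : 0 < d) (hdn : d ≤ n) (v : Fin n) :
    mpPow A d v v ≤ 0 :=
  calc mpPow A d v v ≤ mpTr (mpPow A d) := le_sup (f := fun v => mpPow A d v v) (mem_univ v)
    _ ≤ mpTrFun A := le_sup (f := fun k => mpTr (mpPow A k)) (mem_Icc.mpr ⟨hd, hdn⟩)
    _ ≤ 0 := h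

end Walks

theorem exists_lt_le_apply_eq {n : ℕ} (p : ℕ → Fin n) : ∃ s t, s < t ∧ t ≤ n ∧ p s = p t := by
  obtain ⟨a, ha, b, hb, hab, hpab⟩ := exists_ne_map_eq_of_card_lt_of_maps_to
    (s := range (n + 1)) (t := (univ : Finset (Fin n))) (by simp) (f := p) (fun _ _ => by simp)
  rw [mem_range, Nat.lt_succ_iff] at ha hb
  rcases Nat.lt_or_gt_of_ne hab with hlt | hgt
  · exact ⟨a, b, hlt, hb, hpab⟩
  · exact ⟨b, a, hgt, ha, hpab.symm⟩

theorem exists_lt_mpPow_le {n : ℕ} (A : Matrix (Fin n) (Fin n) MP) (h : mpTrFun A ≤ 0) {k : ℕ}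
    (hk : n ≤ k) (i j : Fin n) : ∃ m < k, mpPow A k i j ≤ mpPow A m i j := by
  have hn : 0 < n := i.pos
  by_cases hbot : mpPow A k i j = ⊥
  · exact ⟨0, by omega, by simp [hbot]⟩
  obtain ⟨p, hp0, hpk, hp⟩ := exists_mpWalkWeight_eq_mpPow A hbot
  obtain ⟨s, t, hst, htn, hpst⟩ := exists_lt_le_apply_eq p
  refine ⟨s + (k - t), by omega, ?_⟩
  have hsplit : k = s + (t - s) + (k - t) := by omega
  have hcycle : mpWalkWeight A (fun u => p (s + u)) (t - s) ≤ 0 :=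
    (mpWalkWeight_le_mpPow A rfl (by rw [Nat.add_sub_cancel' hst.le, ← hpst])).trans
      (mpPow_self_le_zero A h (by omega) (by omega) (p s))
  rw [hp]
  nth_rw 1 [hsplit]
  rw [mpWalkWeight_add, mpWalkWeight_add]
  calc mpWalkWeight A p s + mpWalkWeight A (fun u => p (s + u)) (t - s)
        + mpWalkWeight A (fun u => p (s + (t - s) + u)) (k - t)
      ≤ mpWalkWeight A p s + mpWalkWeight A (fun u => p (s + (t - s) + u)) (k - t) := by
        gcongr; exact add_le_of_nonpos_right hcycle
    _ ≤ mpPow A s i (p s) + mpPow A (k - t) (p s) j := by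
        gcongr
        · exact mpWalkWeight_le_mpPow A hp0 rfl
        · exact mpWalkWeight_le_mpPow A (by rw [add_zero, Nat.add_sub_cancel' hst.le, hpst])
            (by rw [← hsplit, hpk])
    _ ≤ mpPow A (s + (k - t)) i j := mpPow_add_mpPow_le A s (k - t) i (p s) j

theorem stmt5 {n : ℕ} (A : Matrix (Fin n) (Fin n) MP) (h : mpTrFun A ≤ 0) :
    ∀ k : ℕ, ∀ i j, mpPow A k i j ≤ mpStar A i j := by
  intro k
  induction k using Nat.strong_induction_on with
  | _ k ih =>
    intro i j
    rcases Nat.lt_or_ge k n with hk | hk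
    · exact le_sup (f := fun l => mpPow A l i j) (mem_range.mpr hk)
    · obtain ⟨m, hm, hle⟩ := exists_lt_mpPow_le A h hk i j
      exact hle.trans (ih m hm i j)
end
end

section
/- Let A be an n×n matrix over the max-plus semiring. If the inequality Ax ≤ x has a regular solution x (all entries of x finite), then Tr(A) = max(tr A, tr A², …, tr Aⁿ) ≤ 0. -/
noncomputable section

/-! Every power of `A` still satisfies `Aᵏ x ≤ x`; reading the `i`-th row of this at the
diagonal entry gives `(Aᵏ)ᵢᵢ + xᵢ ≤ xᵢ`, and since `xᵢ` is finite it can be cancelled. -/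

section MaxPlus

variable {n : ℕ}

lemma mpMulVec_mono {m : ℕ} (A : Matrix (Fin m) (Fin n) MP) {x y : Fin n → MP}
    (hxy : ∀ j, x j ≤ y j) (i : Fin m) : mpMulVec A x i ≤ mpMulVec A y i :=
  Finset.sup_mono_fun fun j _ => add_le_add_right (hxy j) _

lemma mpMulVec_mpId (x : Fin n → MP) : mpMulVec (mpId n) x = x := by
  funext i
  refine le_antisymm (Finset.sup_le fun j _ => ?_) ?_
  · by_cases hij : i = j <;> simp [mpId, hij]
  · calc x i = mpId n i i + x i := by simp [mpId]
      _ ≤ mpMulVec (mpId n) x i :=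
          Finset.le_sup (f := fun j => mpId n i j + x j) (Finset.mem_univ i)

lemma mpMulVec_mpMul_le {m p : ℕ} (A : Matrix (Fin m) (Fin n) MP)
    (B : Matrix (Fin n) (Fin p) MP) (x : Fin p → MP) (i : Fin m) :
    mpMulVec (mpMul A B) x i ≤ mpMulVec A (mpMulVec B x) i := by
  refine Finset.sup_le fun j _ => ?_
  rw [mpMul, Finset.apply_sup_eq_sup_comp_of_linearOrder (· + x j)
    (fun _ _ hab => add_le_add_left hab _) (WithBot.bot_add _)]
  refine Finset.sup_le fun l _ => ?_
  calc A i l + B l j + x j = A i l + (B l j + x j) := add_assoc _ _ _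
    _ ≤ A i l + mpMulVec B x l :=
        add_le_add_right (Finset.le_sup (f := fun j => B l j + x j) (Finset.mem_univ j)) _
    _ ≤ mpMulVec A (mpMulVec B x) i :=
        Finset.le_sup (f := fun l => A i l + mpMulVec B x l) (Finset.mem_univ l)

lemma mpMulVec_mpPow_le {A : Matrix (Fin n) (Fin n) MP} {x : Fin n → MP}
    (h : ∀ i, mpMulVec A x i ≤ x i) (k : ℕ) (i : Fin n) : mpMulVec (mpPow A k) x i ≤ x i := by
  induction k generalizing i with
  | zero => rw [mpPow, mpMulVec_mpId]
  | succ k ih =>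
    calc mpMulVec (mpPow A (k + 1)) x i ≤ mpMulVec A (mpMulVec (mpPow A k) x) i :=
          mpMulVec_mpMul_le _ _ _ _
      _ ≤ mpMulVec A x i := mpMulVec_mono A ih i
      _ ≤ x i := h i

lemma mpPow_diag_nonpos {A : Matrix (Fin n) (Fin n) MP} {x : Fin n → MP} (hx : Regular x)
    (h : ∀ i, mpMulVec A x i ≤ x i) (k : ℕ) (i : Fin n) : mpPow A k i i ≤ 0 := by
  have hdiag : mpPow A k i i + x i ≤ 0 + x i := by
    rw [zero_add]
    exact (Finset.le_sup (f := fun j => mpPow A k i j + x j) (Finset.mem_univ i)).trans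
      (mpMulVec_mpPow_le h k i)
  exact (WithBot.add_le_add_iff_right (hx i)).1 hdiag

end MaxPlus

theorem stmt7 {n : ℕ} (A : Matrix (Fin n) (Fin n) MP) (x : Fin n → MP) (hx : Regular x)
    (h : ∀ i, mpMulVec A x i ≤ x i) : mpTrFun A ≤ 0 :=
  Finset.sup_le fun k _ => Finset.sup_le fun i _ => mpPow_diag_nonpos hx h k i
end
end

section
/- Let A and B be row-regular m×n matrices over the max-plus semiring and suppose Tr(B⁻A) ≤ 0, where Tr(C) = max(tr C, …, tr Cⁿ) for the n×n matrix C = B⁻A. Then for every regular vector u, the vector x = (B⁻A)* u satisfies the two-sided inequality A x ≤ B x. -/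
noncomputable section

/-!
Put `C = B⁻A` and `x = C* u`. Since `Tr C ≤ 0`, no cycle of the weighted digraph of `C` has
positive weight, so a path of length at least `n` can be shortened, by cutting out a cycle,
without decreasing its weight. Hence every power `Cᵏ` is bounded by `C* = I ⊕ ⋯ ⊕ Cⁿ⁻¹`, so
`C C* ≤ C*` and `C x ≤ x`. Finally `A x ≤ B (B⁻ (A x)) = B (C x) ≤ B x`, where the first
inequality holds because every row of `B` has a finite entry.
-/

lemma add_finsetSup {ι : Type*} (c : MP) (s : Finset ι) (f : ι → MP) :
    c + s.sup f = s.sup fun i => c + f i :=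
  Finset.apply_sup_eq_sup_comp_of_linearOrder (c + ·) (fun _ _ h => add_le_add_right h c)
    (WithBot.add_bot c)

lemma finsetSup_add {ι : Type*} (s : Finset ι) (f : ι → MP) (c : MP) :
    s.sup f + c = s.sup fun i => f i + c := by
  simpa only [add_comm c] using add_finsetSup c s f

section MatrixVector

variable {m n p : ℕ}

lemma mpMulVec_mpMul (A : Matrix (Fin m) (Fin n) MP) (B : Matrix (Fin n) (Fin p) MP)
    (x : Fin p → MP) : mpMulVec (mpMul A B) x = mpMulVec A (mpMulVec B x) := by
  funext i
  simp only [mpMulVec, mpMul, finsetSup_add, add_finsetSup, add_assoc]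
  exact Finset.sup_comm _ _ _

lemma mpMulVec_mono_left {A A' : Matrix (Fin m) (Fin n) MP} (h : ∀ i j, A i j ≤ A' i j) (x : Fin n → MP) :
    mpMulVec A x ≤ mpMulVec A' x :=
  fun i => Finset.sup_mono_fun fun j _ => add_le_add_left (h i j) (x j)

lemma mpMulVec_mono_right (A : Matrix (Fin m) (Fin n) MP) {x y : Fin n → MP} (h : x ≤ y) :
    mpMulVec A x ≤ mpMulVec A y :=
  fun i => Finset.sup_mono_fun fun j _ => add_le_add_right (h j) (A i j)

lemma le_mpMulVec_mpConj_mpMulVec {B : Matrix (Fin m) (Fin n) MP} (hB : RowRegular B)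
    (z : Fin m → MP) : z ≤ mpMulVec B (mpMulVec (mpConj B) z) := by
  intro i
  obtain ⟨k, hk⟩ := hB i
  obtain ⟨b, hb⟩ := WithBot.ne_bot_iff_exists.mp hk
  have hconj : mpConj B k i = ((-b : ℝ) : MP) := by simp [mpConj, ← hb]
  calc z i = ((b : ℝ) : MP) + (((-b : ℝ) : MP) + z i) := by
        rw [← add_assoc, ← WithBot.coe_add, add_neg_cancel, WithBot.coe_zero, zero_add]
    _ ≤ B i k + mpMulVec (mpConj B) z k := by
        rw [← hb, ← hconj]
        exact add_le_add_right (Finset.le_sup (f := fun l => mpConj B k l + z l)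
          (Finset.mem_univ i)) _
    _ ≤ mpMulVec B (mpMulVec (mpConj B) z) i :=
        Finset.le_sup (f := fun l => B i l + mpMulVec (mpConj B) z l) (Finset.mem_univ k)

end MatrixVector

section Paths

variable {n : ℕ} (C : Matrix (Fin n) (Fin n) MP)

/-- A path `w 0 → ⋯ → w p` is encoded by `w : ℕ → Fin n`; values beyond `p` are ignored. -/
def pathWeight (p : ℕ) (w : ℕ → Fin n) : MP :=
  ∑ t ∈ Finset.range p, C (w t) (w (t + 1))

lemma pathWeight_add (p q : ℕ) (w : ℕ → Fin n) :
    pathWeight C (p + q) w = pathWeight C p w + pathWeight C q fun t => w (p + t) :=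
  Finset.sum_range_add _ p q

lemma pathWeight_succ (p : ℕ) (w : ℕ → Fin n) :
    pathWeight C (p + 1) w = C (w 0) (w 1) + pathWeight C p fun t => w (t + 1) := by
  rw [pathWeight, Finset.sum_range_succ', add_comm]
  rfl

lemma pathWeight_le_mpPow (p : ℕ) (w : ℕ → Fin n) :
    pathWeight C p w ≤ mpPow C p (w 0) (w p) := by
  induction p generalizing w with
  | zero => simp [pathWeight, mpPow, mpId]
  | succ p ih =>
    rw [pathWeight_succ]
    calc C (w 0) (w 1) + pathWeight C p (fun t => w (t + 1))
        ≤ C (w 0) (w 1) + mpPow C p (w 1) (w (p + 1)) :=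
          add_le_add_right (ih fun t => w (t + 1)) _
      _ ≤ mpPow C (p + 1) (w 0) (w (p + 1)) :=
          Finset.le_sup (f := fun l => C (w 0) l + mpPow C p l (w (p + 1))) (Finset.mem_univ _)

lemma exists_pathWeight_eq_mpPow (p : ℕ) (i j : Fin n) (h : mpPow C p i j ≠ ⊥) :
    ∃ w : ℕ → Fin n, w 0 = i ∧ w p = j ∧ pathWeight C p w = mpPow C p i j := by
  induction p generalizing i with
  | zero =>
    have hij : i = j := by by_contra hij; simp [mpPow, mpId, hij] at h
    subst hij
    exact ⟨fun _ => i, rfl, rfl, by simp [pathWeight, mpPow, mpId]⟩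
  | succ p ih =>
    obtain ⟨l, -, hl⟩ := Finset.exists_mem_eq_sup Finset.univ ⟨i, Finset.mem_univ i⟩
      fun l => C i l + mpPow C p l j
    change Finset.univ.sup (fun l => C i l + mpPow C p l j) ≠ ⊥ at h
    rw [hl, Ne, WithBot.add_eq_bot, not_or] at h
    obtain ⟨w, hw0, hwp, hw⟩ := ih l h.2
    refine ⟨fun | 0 => i | t + 1 => w t, rfl, hwp, ?_⟩
    rw [pathWeight_succ]
    exact (congrArg₂ (· + ·) (congrArg (C i) hw0) hw).trans hl.symm

/-- The second path is the first with its closed subpath `w a → ⋯ → w (a + d)` cut out. -/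
lemma pathWeight_eq_cycle_add_shortcut (w : ℕ → Fin n) {a d : ℕ} (e : ℕ)
    (hw : w (a + d) = w a) :
    pathWeight C (a + d + e) w = pathWeight C d (fun t => w (a + t)) +
      pathWeight C (a + e) fun t => if t ≤ a then w t else w (t + d) := by
  set w' : ℕ → Fin n := fun t => if t ≤ a then w t else w (t + d)
  have hpre : pathWeight C a w' = pathWeight C a w := by
    refine Finset.sum_congr rfl fun t ht => ?_
    have ht : t < a := Finset.mem_range.mp ht
    simp only [w', if_pos ht.le, if_pos (Nat.succ_le_of_lt ht)]
  have hsuf : (fun t => w' (a + t)) = fun t => w (a + d + t) := by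
    funext t
    rcases t with _ | t
    · simp [w', hw]
    · simp only [w', if_neg (by omega : ¬a + (t + 1) ≤ a)]
      congr 1
      omega
  rw [pathWeight_add C (a + d) e, pathWeight_add C a d, pathWeight_add C a e, hpre, hsuf]
  abel

variable {C}

lemma pathWeight_cycle_nonpos (htr : mpTrFun C ≤ 0) {d : ℕ} (hd : d ∈ Finset.Icc 1 n)
    (w : ℕ → Fin n) (hw : w d = w 0) : pathWeight C d w ≤ 0 :=
  calc pathWeight C d w ≤ mpPow C d (w 0) (w d) := pathWeight_le_mpPow C d w
    _ = mpPow C d (w 0) (w 0) := by rw [hw]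
    _ ≤ mpTr (mpPow C d) := Finset.le_sup (f := fun i => mpPow C d i i) (Finset.mem_univ _)
    _ ≤ mpTrFun C := Finset.le_sup (f := fun k => mpTr (mpPow C k)) hd
    _ ≤ 0 := htr

lemma exists_closed_subpath (w : ℕ → Fin n) :
    ∃ a d : ℕ, 1 ≤ d ∧ a + d ≤ n ∧ w (a + d) = w a := by
  obtain ⟨s, t, hst, hw⟩ :=
    Fintype.exists_ne_map_eq_of_card_lt (fun t : Fin (n + 1) => w t) (by simp)
  have hst : (s : ℕ) ≠ t := Fin.val_ne_of_ne hst
  rcases lt_or_gt_of_ne hst with h | h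
  · exact ⟨s, t - s, by omega, by omega, by rw [Nat.add_sub_cancel' h.le]; exact hw.symm⟩
  · exact ⟨t, s - t, by omega, by omega, by rw [Nat.add_sub_cancel' h.le]; exact hw⟩

lemma exists_shorter_path (htr : mpTrFun C ≤ 0) {p : ℕ} (hp : n ≤ p) (w : ℕ → Fin n) :
    ∃ q < p, ∃ w' : ℕ → Fin n, w' 0 = w 0 ∧ w' q = w p ∧
      pathWeight C p w ≤ pathWeight C q w' := by
  obtain ⟨a, d, hd, had, hw⟩ := exists_closed_subpath w
  obtain ⟨e, rfl⟩ : ∃ e, p = a + d + e := ⟨p - (a + d), by omega⟩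
  refine ⟨a + e, by omega, fun t => if t ≤ a then w t else w (t + d), by simp, ?_, ?_⟩
  · dsimp only
    split_ifs with h
    · obtain rfl : e = 0 := by omega
      simpa using hw.symm
    · congr 1
      omega
  · rw [pathWeight_eq_cycle_add_shortcut C w e hw]
    refine (add_le_add_left (pathWeight_cycle_nonpos htr (Finset.mem_Icc.mpr ⟨hd, by omega⟩)
      _ (by simpa using hw)) _).trans_eq (zero_add _)

theorem mpPow_le_mpStar (htr : mpTrFun C ≤ 0) (p : ℕ) (i j : Fin n) :
    mpPow C p i j ≤ mpStar C i j := by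
  induction p using Nat.strong_induction_on generalizing i j with
  | _ p ih =>
  rcases lt_or_ge p n with hp | hp
  · exact Finset.le_sup (f := fun k => mpPow C k i j) (Finset.mem_range.mpr hp)
  by_cases hbot : mpPow C p i j = ⊥
  · simp [hbot]
  obtain ⟨w, rfl, rfl, hw⟩ := exists_pathWeight_eq_mpPow C p i j hbot
  obtain ⟨q, hq, w', h0, hq', hle⟩ := exists_shorter_path htr hp w
  calc mpPow C p (w 0) (w p) = pathWeight C p w := hw.symm
    _ ≤ pathWeight C q w' := hle
    _ ≤ mpPow C q (w' 0) (w' q) := pathWeight_le_mpPow C q w'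
    _ = mpPow C q (w 0) (w p) := by rw [h0, hq']
    _ ≤ mpStar C (w 0) (w p) := ih q hq _ _

theorem mpMul_mpStar_le (htr : mpTrFun C ≤ 0) (i j : Fin n) :
    mpMul C (mpStar C) i j ≤ mpStar C i j := by
  refine Finset.sup_le fun l _ => ?_
  change C i l + (Finset.range n).sup (fun k => mpPow C k l j) ≤ _
  rw [add_finsetSup]
  exact Finset.sup_le fun k _ =>
    (Finset.le_sup (f := fun l => C i l + mpPow C k l j) (Finset.mem_univ l)).trans
      (mpPow_le_mpStar htr (k + 1) i j)

end Paths

theorem stmt9_general {m n : ℕ} (A B : Matrix (Fin m) (Fin n) MP)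
    (hB : RowRegular B)
    (htr : mpTrFun (mpMul (mpConj B) A) ≤ 0)
    (u : Fin n → MP) :
    ∀ i, mpMulVec A (mpMulVec (mpStar (mpMul (mpConj B) A)) u) i ≤
      mpMulVec B (mpMulVec (mpStar (mpMul (mpConj B) A)) u) i := by
  set C := mpMul (mpConj B) A
  set x := mpMulVec (mpStar C) u
  have hCx : mpMulVec C x ≤ x := by
    rw [← mpMulVec_mpMul]
    exact mpMulVec_mono_left (mpMul_mpStar_le htr) u
  calc mpMulVec A x ≤ mpMulVec B (mpMulVec (mpConj B) (mpMulVec A x)) :=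
        le_mpMulVec_mpConj_mpMulVec hB _
    _ = mpMulVec B (mpMulVec C x) := by rw [mpMulVec_mpMul]
    _ ≤ mpMulVec B x := mpMulVec_mono_right B hCx

theorem stmt9 {m n : ℕ} (A B : Matrix (Fin m) (Fin n) MP)
    (hA : RowRegular A) (hB : RowRegular B)
    (htr : mpTrFun (mpMul (mpConj B) A) ≤ 0)
    (u : Fin n → MP) (hu : Regular u) :
    ∀ i, mpMulVec A (mpMulVec (mpStar (mpMul (mpConj B) A)) u) i ≤
      mpMulVec B (mpMulVec (mpStar (mpMul (mpConj B) A)) u) i :=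
  stmt9_general A B hB htr u
end
end

section
/- Sparsification preserves regular solutions: let a_1,…,a_n, b_1,…,b_n ∈ ℝ ∪ {-∞}, and define â_j = a_j if a_j > b_j and â_j = -∞ otherwise, and b̂_j = b_j if b_j ≥ a_j and b̂_j = -∞ otherwise. Then for all x_1,…,x_n ∈ ℝ, the inequality max_j (a_j + x_j) ≤ max_j (b_j + x_j) holds if and only if max_j (â_j + x_j) ≤ max_j (b̂_j + x_j). -/
noncomputable section

/-!
Adding the finite x_j does not change which of a_j, b_j wins, so the claim is a statement about
two families u = a + x, v = b + x in a linear order with ⊥. For each j exactly one of the sparsified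
entries equals max(u_j, v_j) and the other is ⊥, so both sides keep the same joint maximum. Given
max u ≤ max v, the maximum of v is attained at an index k with u_k ≤ v_k, which the sparsification
of v keeps; conversely the sparsified v is pointwise below v.
-/

section SparseSup

variable {ι α : Type*} [LinearOrder α] [OrderBot α] (s : Finset ι) (u v : ι → α)

theorem Finset.sup_ite_lt_sup_sup_ite_le :
    (s.sup fun j => if v j < u j then u j else ⊥) ⊔ (s.sup fun j => if u j ≤ v j then v j else ⊥) =
      s.sup u ⊔ s.sup v := by
  rw [← Finset.sup_sup, ← Finset.sup_sup]
  congr 1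
  funext j
  simp only [Pi.sup_apply]
  split_ifs <;> simp_all [le_of_lt]

theorem Finset.sup_ite_le_le_sup_ite_le :
    (s.sup fun j => if u j ≤ v j then v j else ⊥) ≤ s.sup v :=
  Finset.sup_mono_fun fun j _ => by split_ifs <;> simp

theorem Finset.sup_le_sup_ite_le_of_sup_le (h : s.sup u ≤ s.sup v) :
    s.sup v ≤ s.sup fun j => if u j ≤ v j then v j else ⊥ := by
  rcases s.eq_empty_or_nonempty with rfl | hs
  · simp
  obtain ⟨k, hk, hvk⟩ := s.exists_mem_eq_sup hs v
  have hle : u k ≤ v k := hvk ▸ (Finset.le_sup hk).trans h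
  calc s.sup v = if u k ≤ v k then v k else ⊥ := by rw [if_pos hle, hvk]
    _ ≤ _ := Finset.le_sup (f := fun j => if u j ≤ v j then v j else ⊥) hk

theorem Finset.sup_le_sup_iff_sup_ite_lt_le_sup_ite_le :
    s.sup u ≤ s.sup v ↔
      (s.sup fun j => if v j < u j then u j else ⊥) ≤ s.sup fun j => if u j ≤ v j then v j else ⊥ := by
  have hsup := Finset.sup_ite_lt_sup_sup_ite_le s u v
  constructor
  · intro h
    calc (s.sup fun j => if v j < u j then u j else ⊥)
        ≤ s.sup u ⊔ s.sup v := hsup ▸ le_sup_left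
      _ = s.sup v := sup_eq_right.mpr h
      _ ≤ _ := Finset.sup_le_sup_ite_le_of_sup_le s u v h
  · intro h
    calc s.sup u ≤ s.sup u ⊔ s.sup v := le_sup_left
      _ = s.sup fun j => if u j ≤ v j then v j else ⊥ := by rw [← hsup, sup_eq_right.mpr h]
      _ ≤ s.sup v := Finset.sup_ite_le_le_sup_ite_le s u v

end SparseSup

theorem WithBot.ite_lt_add_coe {α : Type*} [AddCommMonoid α] [LinearOrder α]
    [IsOrderedCancelAddMonoid α] (a b : WithBot α) (x : α) :
    (if b < a then a else ⊥) + (x : WithBot α) = if b + x < a + x then a + x else ⊥ := by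
  simp only [WithBot.add_lt_add_iff_right WithBot.coe_ne_bot]
  split_ifs <;> simp

theorem WithBot.ite_le_add_coe {α : Type*} [AddCommMonoid α] [LinearOrder α]
    [IsOrderedCancelAddMonoid α] (a b : WithBot α) (x : α) :
    (if a ≤ b then b else ⊥) + (x : WithBot α) = if a + x ≤ b + x then b + x else ⊥ := by
  simp only [WithBot.add_le_add_iff_right WithBot.coe_ne_bot]
  split_ifs <;> simp

theorem stmt10 {n : ℕ} (a b : Fin n → MP) (x : Fin n → ℝ) :
    ((Finset.univ.sup fun j => a j + (x j : MP)) ≤ Finset.univ.sup fun j => b j + (x j : MP)) ↔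
      ((Finset.univ.sup fun j => (if b j < a j then a j else ⊥) + (x j : MP)) ≤
        Finset.univ.sup fun j => (if a j ≤ b j then b j else ⊥) + (x j : MP)) := by
  simp only [WithBot.ite_lt_add_coe, WithBot.ite_le_add_coe]
  exact Finset.sup_le_sup_iff_sup_ite_lt_le_sup_ite_le _ _ _
end
end

section
/- Let A, B be m×n matrices over the max-plus semiring, and let G be a strictly row-monomial matrix obtained from B by keeping one non-(-∞) entry in each row and setting the others to -∞ (so G ≤ B entrywise, G row-regular with exactly one finite entry per row). Set H = G⁻(A ⊕ B). Then H² ≥ H entrywise, and consequently H^{k+1} ≥ H^k for all k ≥ 1, so that H* = I ⊕ H ⊕ ⋯ ⊕ H^{n-1} = I ⊕ H^{n-1} and max(tr H, …, tr Hⁿ) = tr Hⁿ. -/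
noncomputable section

/-!
Write `M = A ⊕ B`. Every row of `G` has a finite entry, which its conjugate cancels, so
`M G⁻ ≥ G G⁻ ≥ I`. Hence `H² = G⁻ (M G⁻) M ≥ G⁻ M = H`, and multiplying on the left by `H`
shows that the powers `H^k`, `k ≥ 1`, increase. The bounded star and the trace function are
therefore attained at their top powers.
-/

namespace MP

lemma add_finsetSup {ι : Type*} (a : MP) (s : Finset ι) (f : ι → MP) :
    a + s.sup f = s.sup fun i => a + f i :=
  Finset.apply_sup_eq_sup_comp (a + ·) (add_max a) (by simp)

lemma finsetSup_add {ι : Type*} (a : MP) (s : Finset ι) (f : ι → MP) :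
    s.sup f + a = s.sup fun i => f i + a := by
  simpa only [add_comm] using add_finsetSup a s f

end MP

lemma mpMul_le_mpMul {m n p : ℕ} {A A' : Matrix (Fin m) (Fin n) MP}
    {B B' : Matrix (Fin n) (Fin p) MP} (hA : ∀ i j, A i j ≤ A' i j)
    (hB : ∀ i j, B i j ≤ B' i j) (i : Fin m) (k : Fin p) :
    mpMul A B i k ≤ mpMul A' B' i k :=
  Finset.sup_mono_fun fun j _ => add_le_add (hA i j) (hB j k)

lemma mpMul_assoc {m n p q : ℕ} (A : Matrix (Fin m) (Fin n) MP)
    (B : Matrix (Fin n) (Fin p) MP) (C : Matrix (Fin p) (Fin q) MP) :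
    mpMul (mpMul A B) C = mpMul A (mpMul B C) := by
  funext i l
  simp only [mpMul, MP.finsetSup_add, MP.add_finsetSup, add_assoc]
  exact Finset.sup_comm _ _ _

lemma mpId_mpMul {m n : ℕ} (A : Matrix (Fin m) (Fin n) MP) : mpMul (mpId m) A = A := by
  funext i k
  simp [mpMul, mpId, ite_add, Finset.sup_ite, Finset.filter_eq]

lemma mpMul_mpId {m n : ℕ} (A : Matrix (Fin m) (Fin n) MP) : mpMul A (mpId n) = A := by
  funext i k
  simp [mpMul, mpId, add_ite, Finset.sup_ite, Finset.filter_eq']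

lemma mpPow_one {n : ℕ} (A : Matrix (Fin n) (Fin n) MP) : mpPow A 1 = A :=
  mpMul_mpId A

lemma mpPow_two {n : ℕ} (A : Matrix (Fin n) (Fin n) MP) : mpPow A 2 = mpMul A A := by
  rw [mpPow, mpPow_one]

lemma add_mpConj_self {m n : ℕ} {G : Matrix (Fin m) (Fin n) MP} {i : Fin m} {k : Fin n}
    (hik : G i k ≠ ⊥) : G i k + mpConj G k i = 0 := by
  obtain ⟨r, hr⟩ := WithBot.ne_bot_iff_exists.mp hik
  simp only [mpConj, ← hr, WithBot.map_coe, ← WithBot.coe_add, add_neg_cancel, WithBot.coe_zero]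

lemma mpId_le_mpMul_mpConj {m n : ℕ} {G M : Matrix (Fin m) (Fin n) MP} (hG : RowRegular G)
    (hGM : ∀ i j, G i j ≤ M i j) (i j : Fin m) : mpId m i j ≤ mpMul M (mpConj G) i j := by
  by_cases hij : i = j
  · subst hij
    obtain ⟨k, hk⟩ := hG i
    calc mpId m i i = G i k + mpConj G k i := by simp [mpId, add_mpConj_self hk]
      _ ≤ M i k + mpConj G k i := add_le_add_left (hGM i k) _
      _ ≤ mpMul M (mpConj G) i i :=
          Finset.le_sup (f := fun k => M i k + mpConj G k i) (Finset.mem_univ k)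
  · simp [mpId, hij]

lemma le_mpMul_self_of_mpId_le {m n : ℕ} {C : Matrix (Fin n) (Fin m) MP}
    {M : Matrix (Fin m) (Fin n) MP} (h : ∀ i j, mpId m i j ≤ mpMul M C i j) (i j : Fin n) :
    mpMul C M i j ≤ mpMul (mpMul C M) (mpMul C M) i j := by
  rw [mpMul_assoc, ← mpMul_assoc M]
  conv_lhs => rw [← mpId_mpMul M]
  exact mpMul_le_mpMul (fun _ _ => le_rfl) (mpMul_le_mpMul h fun _ _ => le_rfl) i j

section Increasing

variable {n : ℕ} {H : Matrix (Fin n) (Fin n) MP} (hH : ∀ i j, H i j ≤ mpMul H H i j)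
include hH

lemma mpPow_le_mpPow_succ {k : ℕ} (hk : 1 ≤ k) (i j : Fin n) :
    mpPow H k i j ≤ mpPow H (k + 1) i j := by
  induction k, hk using Nat.le_induction generalizing i j with
  | base => simpa only [← mpPow_two, mpPow_one] using hH i j
  | succ k _ ih => exact mpMul_le_mpMul (fun _ _ => le_rfl) ih i j

lemma mpPow_le_mpPow {a b : ℕ} (ha : 1 ≤ a) (hab : a ≤ b) (i j : Fin n) :
    mpPow H a i j ≤ mpPow H b i j := by
  induction b, hab using Nat.le_induction with
  | base => exact le_rfl
  | succ b hab ih => exact ih.trans (mpPow_le_mpPow_succ hH (ha.trans hab) i j)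

lemma mpStar_eq_mpId_sup_mpPow (i j : Fin n) :
    mpStar H i j = mpId n i j ⊔ mpPow H (n - 1) i j := by
  have hn : 0 < n := i.pos
  apply le_antisymm
  · refine Finset.sup_le fun k hk => ?_
    rcases Nat.eq_zero_or_pos k with rfl | hk0
    · exact le_sup_left
    · exact le_sup_of_le_right
        (mpPow_le_mpPow hH hk0 (by have := Finset.mem_range.mp hk; omega) i j)
  · exact sup_le
      (Finset.le_sup (f := fun k => mpPow H k i j) (Finset.mem_range.mpr hn))
      (Finset.le_sup (f := fun k => mpPow H k i j) (Finset.mem_range.mpr (by omega)))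

lemma mpTrFun_eq_mpTr_mpPow : mpTrFun H = mpTr (mpPow H n) := by
  rcases Nat.eq_zero_or_pos n with rfl | hn
  · simp [mpTrFun, mpTr]
  apply le_antisymm
  · refine Finset.sup_le fun k hk => Finset.sup_le fun i _ => ?_
    rw [Finset.mem_Icc] at hk
    exact (mpPow_le_mpPow hH hk.1 hk.2 i i).trans
      (Finset.le_sup (f := fun i => mpPow H n i i) (Finset.mem_univ i))
  · exact Finset.le_sup (f := fun k => mpTr (mpPow H k)) (Finset.mem_Icc.mpr ⟨hn, le_rfl⟩)

end Increasing

theorem stmt12_general {m n : ℕ} (A B G : Matrix (Fin m) (Fin n) MP)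
    (hG : RowMonomial G)
    (hGle : ∀ i j, G i j ≤ B i j)
    (H : Matrix (Fin n) (Fin n) MP) (hH : H = mpMul (mpConj G) (mpAdd A B)) :
    (∀ i j, H i j ≤ mpMul H H i j) ∧
      (∀ k : ℕ, 1 ≤ k → ∀ i j, mpPow H k i j ≤ mpPow H (k + 1) i j) ∧
      (∀ i j, mpStar H i j = mpId n i j ⊔ mpPow H (n - 1) i j) ∧
      mpTrFun H = mpTr (mpPow H n) := by
  have hGreg : RowRegular G := fun i => (hG i).exists
  have hGM : ∀ i j, G i j ≤ mpAdd A B i j := fun i j => (hGle i j).trans le_sup_right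
  have hHH : ∀ i j, H i j ≤ mpMul H H i j := by
    subst hH
    exact le_mpMul_self_of_mpId_le (mpId_le_mpMul_mpConj hGreg hGM)
  exact ⟨hHH, fun _ hk => mpPow_le_mpPow_succ hHH hk, mpStar_eq_mpId_sup_mpPow hHH,
    mpTrFun_eq_mpTr_mpPow hHH⟩

theorem stmt12 {m n : ℕ} (A B G : Matrix (Fin m) (Fin n) MP)
    (hB : RowRegular B) (hG : RowMonomial G)
    (hGle : ∀ i j, G i j ≤ B i j) (hGB : ∀ i j, G i j ≠ ⊥ → G i j = B i j)
    (H : Matrix (Fin n) (Fin n) MP) (hH : H = mpMul (mpConj G) (mpAdd A B)) :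
    (∀ i j, H i j ≤ mpMul H H i j) ∧
      (∀ k : ℕ, 1 ≤ k → ∀ i j, mpPow H k i j ≤ mpPow H (k + 1) i j) ∧
      (∀ i j, mpStar H i j = mpId n i j ⊔ mpPow H (n - 1) i j) ∧
      mpTrFun H = mpTr (mpPow H n) :=
  stmt12_general A B G hG hGle H hH
end
end

section
/- Correctness of the second pruning criterion: under the setting of the backtracking procedure, fix entry b_{pq} ≠ -∞ in row p, and suppose for some row i and index j ≠ q that b_{iq} - b_{pq} + max(a_{pj}, b_{pj}) ≥ b_{ij}. Then for any finite x_1,…,x_n with b_{pq} + x_q ≥ max_k (max(a_{pk}, b_{pk}) + x_k), one has b_{iq} + x_q ≥ b_{ij} + x_j; hence the term b_{ij} + x_j never exceeds b_{iq} + x_q and setting b_{ij} to -∞ does not change the value of max_k (b_{ik} + x_k) ⊕ (b_{iq} + x_q). -/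
noncomputable section

theorem WithBot.add_le_coe_add_of_le_coe_sub_add {α : Type*} [AddCommGroup α] [PartialOrder α]
    [IsOrderedAddMonoid α] {c d : WithBot α} {β β' x y : α}
    (hc : c ≤ ((β' - β : α) : WithBot α) + d) (hd : d + (x : WithBot α) ≤ ((β + y : α) : WithBot α)) :
    c + (x : WithBot α) ≤ ((β' + y : α) : WithBot α) :=
  calc c + (x : WithBot α)
      ≤ ((β' - β : α) : WithBot α) + d + (x : WithBot α) := by gcongr
    _ ≤ ((β' - β : α) : WithBot α) + ((β + y : α) : WithBot α) := by
        rw [add_assoc]; gcongr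
    _ = ((β' + y : α) : WithBot α) := by
        rw [← WithBot.coe_add]; congr 1; abel

theorem Finset.sup_sup_eq_of_le_of_le_sup {ι α : Type*} [SemilatticeSup α] [OrderBot α]
    {s : Finset ι} {f g : ι → α} {c : α} (hfg : ∀ k ∈ s, f k ≤ g k)
    (hgf : ∀ k ∈ s, g k ≤ f k ⊔ c) : s.sup f ⊔ c = s.sup g ⊔ c :=
  le_antisymm (sup_le_sup_right (Finset.sup_mono_fun hfg) c)
    (sup_le (Finset.sup_le fun k hk => (hgf k hk).trans
      (sup_le_sup_right (Finset.le_sup hk) c)) le_sup_right)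

theorem stmt18_general {m n : ℕ} (a b : Matrix (Fin m) (Fin n) MP)
    (p i : Fin m) (q j : Fin n)
    (βpq βiq : ℝ)
    (hcrit : b i j ≤ ((βiq - βpq : ℝ) : MP) + (a p j ⊔ b p j))
    (x : Fin n → ℝ)
    (hx : (Finset.univ.sup fun k => (a p k ⊔ b p k) + (x k : MP)) ≤ ((βpq + x q : ℝ) : MP)) :
    b i j + (x j : MP) ≤ ((βiq + x q : ℝ) : MP) ∧
      ((Finset.univ.sup fun k => (if k = j then (⊥ : MP) else b i k) + (x k : MP)) ⊔
          ((βiq + x q : ℝ) : MP) =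
        (Finset.univ.sup fun k => b i k + (x k : MP)) ⊔ ((βiq + x q : ℝ) : MP)) := by
  have hdom : b i j + (x j : MP) ≤ ((βiq + x q : ℝ) : MP) :=
    WithBot.add_le_coe_add_of_le_coe_sub_add hcrit
      ((Finset.le_sup (f := fun k => (a p k ⊔ b p k) + (x k : MP)) (Finset.mem_univ j)).trans hx)
  refine ⟨hdom, Finset.sup_sup_eq_of_le_of_le_sup (fun k _ => ?_) (fun k _ => ?_)⟩
  · split_ifs <;> simp
  · split_ifs with hk
    · subst hk
      exact hdom.trans le_sup_right
    · exact le_sup_left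

theorem stmt18 {m n : ℕ} (a b : Matrix (Fin m) (Fin n) MP)
    (p i : Fin m) (q j : Fin n) (hj : j ≠ q)
    (βpq βiq : ℝ) (hpq : b p q = (βpq : MP)) (hiq : b i q = (βiq : MP))
    (hcrit : b i j ≤ ((βiq - βpq : ℝ) : MP) + (a p j ⊔ b p j))
    (x : Fin n → ℝ)
    (hx : (Finset.univ.sup fun k => (a p k ⊔ b p k) + (x k : MP)) ≤ ((βpq + x q : ℝ) : MP)) :
    b i j + (x j : MP) ≤ ((βiq + x q : ℝ) : MP) ∧
      ((Finset.univ.sup fun k => (if k = j then (⊥ : MP) else b i k) + (x k : MP)) ⊔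
          ((βiq + x q : ℝ) : MP) =
        (Finset.univ.sup fun k => b i k + (x k : MP)) ⊔ ((βiq + x q : ℝ) : MP)) :=
  stmt18_general a b p i q j βpq βiq hcrit x hx
end
end
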